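/- Sine modulation theorem for the OFT: for integrable u : ℝ³ → 𝕆 and f₀ ∈ ℝ, the OFT of x ↦ u(x)·sin(2πf₀x₁) at (f₁,f₂,f₃) equals (U(f₁+f₀,−f₂,−f₃) − U(f₁−f₀,−f₂,−f₃))·(e₁/2), where U is the OFT of u. -/

import Mathlib

/-!
Since `e₁`, `e₂`, `e₄` square to `-1`, each kernel factor is an Euler factor
`exp (t e) = cos t + sin t e`, and
`sin s · exp (t e₁) = ½ (exp ((t - s) e₁) - exp ((t + s) e₁)) e₁`.
Octonion multiplication is not associative, but the stray right factor `e₁` can still be moved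
to the far right of the product: it associates with the `e₁`-factor (alternativity), and moving
it past `exp (p e₂)` and `exp (q e₄)` turns them into `exp (-p e₂)` and `exp (-q e₄)`. This
proves the identity pointwise in `x`; linearity of the integral and of right multiplication by
`e₁` finishes.
-/

noncomputable section
open MeasureTheory Real

/-- Octonions as the Cayley–Dickson double of the quaternions:
pairs of quaternions with the Cayley–Dickson product `omul`.
(The additive, scalar and topological structure is the product structure.) -/
abbrev Octonion : Type := Quaternion ℝ × Quaternion ℝ

/-- Cayley–Dickson multiplication of octonions. -/
def omul (x y : Octonion) : Octonion :=
  (x.1 * y.1 - star y.2 * x.2, y.2 * x.1 + x.2 * star y.1)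

/-- The octonion `1`. -/
def oone : Octonion := (1, 0)

/-- Octonion conjugation. -/
def oconj (x : Octonion) : Octonion := (star x.1, -x.2)

/-- Real part of an octonion. -/
def ore (x : Octonion) : ℝ := x.1.re

/-- `o · o*`, as a real number (its imaginary part vanishes). -/
def onormSq (x : Octonion) : ℝ := ore (omul x (oconj x))

/-- The octonion norm `|o| = √(o·o*)`. -/
def oabs (x : Octonion) : ℝ := Real.sqrt (onormSq x)

/-- Inverse of a (nonzero) octonion. -/
def oinv (x : Octonion) : Octonion := (onormSq x)⁻¹ • oconj x

def e1 : Octonion := ((⟨0,1,0,0⟩ : Quaternion ℝ), 0)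
def e2 : Octonion := ((⟨0,0,1,0⟩ : Quaternion ℝ), 0)
def e3 : Octonion := ((⟨0,0,0,1⟩ : Quaternion ℝ), 0)
def e4 : Octonion := (0, (⟨1,0,0,0⟩ : Quaternion ℝ))
def e5 : Octonion := (0, (⟨0,1,0,0⟩ : Quaternion ℝ))
def e6 : Octonion := (0, (⟨0,0,1,0⟩ : Quaternion ℝ))
def e7 : Octonion := (0, (⟨0,0,0,1⟩ : Quaternion ℝ))

/-- Powers of an octonion (well defined since octonions are power-associative). -/
def opow (o : Octonion) : ℕ → Octonion
  | 0 => oone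
  | n + 1 => omul o (opow o n)

/-- The octonion exponential `exp o = ∑ oᵏ/k!`. -/
def octExp (o : Octonion) : Octonion :=
  ∑' k : ℕ, ((k.factorial : ℝ)⁻¹) • opow o k

/-- The octonion Fourier transform of `u : ℝ³ → 𝕆`,
with octonion products evaluated left to right. -/
def OFT (u : ℝ × ℝ × ℝ → Octonion) (f : ℝ × ℝ × ℝ) : Octonion :=
  ∫ x : ℝ × ℝ × ℝ,
    omul (omul (omul (u x) (octExp ((-(2 * π * f.1 * x.1)) • e1)))
        (octExp ((-(2 * π * f.2.1 * x.2.1)) • e2)))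
      (octExp ((-(2 * π * f.2.2 * x.2.2)) • e4))

open scoped Quaternion

-- The literals in `e1`, `e2`, `e4` elaborate at type `QuaternionAlgebra ℝ (-1) 0 (-1)`, where the
-- simp lemmas of `ℍ[ℝ]` do not fire; `quat` restates them at type `ℍ[ℝ]`.
def quat (a b c d : ℝ) : Quaternion ℝ := ⟨a, b, c, d⟩

@[simp] lemma quat_re (a b c d : ℝ) : (quat a b c d).re = a := rfl
@[simp] lemma quat_imI (a b c d : ℝ) : (quat a b c d).imI = b := rfl
@[simp] lemma quat_imJ (a b c d : ℝ) : (quat a b c d).imJ = c := rfl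
@[simp] lemma quat_imK (a b c d : ℝ) : (quat a b c d).imK = d := rfl

lemma e1_eq : e1 = (quat 0 1 0 0, 0) := rfl
lemma e2_eq : e2 = (quat 0 0 1 0, 0) := rfl
lemma e4_eq : e4 = (0, quat 1 0 0 0) := rfl

lemma omul_smul_left (a : ℝ) (x y : Octonion) : omul (a • x) y = a • omul x y := by
  simp [omul, smul_sub, smul_add]

lemma omul_smul_right (a : ℝ) (x y : Octonion) : omul x (a • y) = a • omul x y := by
  simp [omul, smul_sub, smul_add]

lemma omul_add_left (x y z : Octonion) : omul (x + y) z = omul x z + omul y z := by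
  simp only [omul, Prod.fst_add, Prod.snd_add, Prod.mk_add_mk, Prod.mk.injEq]
  constructor <;> noncomm_ring

lemma omul_sub_left (x y z : Octonion) : omul (x - y) z = omul x z - omul y z := by
  simp only [omul, Prod.fst_sub, Prod.snd_sub, Prod.mk_sub_mk, Prod.mk.injEq]
  constructor <;> noncomm_ring

lemma omul_sub_right (x y z : Octonion) : omul x (y - z) = omul x y - omul x z := by
  simp only [omul, Prod.fst_sub, Prod.snd_sub, Prod.mk_sub_mk, Prod.mk.injEq, star_sub]
  constructor <;> noncomm_ring

lemma omul_oone (x : Octonion) : omul x oone = x := by simp [omul, oone]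

lemma e1_omul_e1 : omul e1 e1 = -oone := by
  ext <;> simp [omul, e1_eq, oone]

lemma e2_omul_e2 : omul e2 e2 = -oone := by
  ext <;> simp [omul, e2_eq, oone]

lemma e4_omul_e4 : omul e4 e4 = -oone := by
  ext <;> simp [omul, e4_eq, oone]

lemma opow_smul (t : ℝ) (e : Octonion) (k : ℕ) : opow (t • e) k = t ^ k • opow e k := by
  induction k with
  | zero => simp [opow]
  | succ k ih => rw [opow, opow, ih, omul_smul_left, omul_smul_right, smul_smul, pow_succ']

lemma opow_two_mul {e : Octonion} (he : omul e e = -oone) (m : ℕ) :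
    opow e (2 * m) = (-1 : ℝ) ^ m • oone := by
  induction m with
  | zero => simp [opow]
  | succ m ih =>
    rw [mul_add_one, opow, opow, ih, omul_smul_right, omul_smul_right, omul_oone, he, pow_succ,
      mul_smul, neg_one_smul]

lemma opow_two_mul_add_one {e : Octonion} (he : omul e e = -oone) (m : ℕ) :
    opow e (2 * m + 1) = (-1 : ℝ) ^ m • e := by
  rw [opow, opow_two_mul he, omul_smul_right, omul_oone]

def ocis (e : Octonion) (t : ℝ) : Octonion := Real.cos t • oone + Real.sin t • e

lemma octExp_smul {e : Octonion} (he : omul e e = -oone) (t : ℝ) :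
    octExp (t • e) = ocis e t := by
  refine HasSum.tsum_eq (HasSum.even_add_odd ?_ ?_)
  · convert (Real.hasSum_cos t).smul_const oone using 2 with m
    rw [opow_smul, opow_two_mul he, smul_smul, smul_smul]
    ring_nf
  · convert (Real.hasSum_sin t).smul_const e using 2 with m
    rw [opow_smul, opow_two_mul_add_one he, smul_smul, smul_smul]
    ring_nf

lemma sin_smul_ocis_e1 (s t : ℝ) :
    Real.sin s • ocis e1 t = (2 : ℝ)⁻¹ • omul (ocis e1 (t - s) - ocis e1 (t + s)) e1 := by
  ext <;> simp [ocis, omul, e1_eq, oone, cos_sub, cos_add, sin_sub, sin_add] <;> ring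

lemma omul_omul_ocis_e1_e1 (x : Octonion) (t : ℝ) :
    omul x (omul (ocis e1 t) e1) = omul (omul x (ocis e1 t)) e1 := by
  ext <;> simp [ocis, omul, e1_eq, oone] <;> ring

lemma omul_e1_ocis_e2_ocis_e4 (x : Octonion) (p q : ℝ) :
    omul (omul (omul x e1) (ocis e2 p)) (ocis e4 q) =
      omul (omul (omul x (ocis e2 (-p))) (ocis e4 (-q))) e1 := by
  ext <;> simp [ocis, omul, e1_eq, e2_eq, e4_eq, oone] <;> ring

lemma sin_smul_omul_ocis (o : Octonion) (s t p q : ℝ) :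
    omul (omul (omul (Real.sin s • o) (ocis e1 t)) (ocis e2 p)) (ocis e4 q) =
      (2 : ℝ)⁻¹ • omul
        (omul (omul (omul o (ocis e1 (t - s))) (ocis e2 (-p))) (ocis e4 (-q)) -
          omul (omul (omul o (ocis e1 (t + s))) (ocis e2 (-p))) (ocis e4 (-q))) e1 := by
  rw [omul_smul_left, ← omul_smul_right, sin_smul_ocis_e1, omul_smul_right, omul_sub_left,
    omul_sub_right, omul_omul_ocis_e1_e1, omul_omul_ocis_e1_e1, omul_smul_left, omul_smul_left,
    omul_sub_left, omul_sub_left, omul_e1_ocis_e2_ocis_e4, omul_e1_ocis_e2_ocis_e4, omul_sub_left]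

lemma norm_omul_le (x y : Octonion) : ‖omul x y‖ ≤ 2 * ‖x‖ * ‖y‖ := by
  have h1 : ‖x.1‖ ≤ ‖x‖ := norm_fst_le x
  have h2 : ‖x.2‖ ≤ ‖x‖ := norm_snd_le x
  have h3 : ‖y.1‖ ≤ ‖y‖ := norm_fst_le y
  have h4 : ‖y.2‖ ≤ ‖y‖ := norm_snd_le y
  refine max_le ?_ ?_
  · calc ‖x.1 * y.1 - star y.2 * x.2‖ ≤ ‖x.1‖ * ‖y.1‖ + ‖y.2‖ * ‖x.2‖ := by
          grw [norm_sub_le, norm_mul_le, norm_mul_le, norm_star]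
      _ ≤ 2 * ‖x‖ * ‖y‖ := by
          nlinarith [norm_nonneg x, norm_nonneg y, norm_nonneg x.1, norm_nonneg y.2]
  · calc ‖y.2 * x.1 + x.2 * star y.1‖ ≤ ‖y.2‖ * ‖x.1‖ + ‖x.2‖ * ‖y.1‖ := by
          grw [norm_add_le, norm_mul_le, norm_mul_le, norm_star]
      _ ≤ 2 * ‖x‖ * ‖y‖ := by
          nlinarith [norm_nonneg x, norm_nonneg y, norm_nonneg x.1, norm_nonneg x.2]

lemma norm_ocis_le (e : Octonion) (t : ℝ) : ‖ocis e t‖ ≤ 1 + ‖e‖ := by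
  have hone : ‖oone‖ = 1 := by simp [oone, Prod.norm_def]
  calc ‖ocis e t‖ ≤ |Real.cos t| * ‖oone‖ + |Real.sin t| * ‖e‖ := by
        grw [ocis, norm_add_le, norm_smul, norm_smul, Real.norm_eq_abs, Real.norm_eq_abs]
    _ ≤ 1 + ‖e‖ := by
        rw [hone, mul_one]
        exact add_le_add (abs_cos_le_one t)
          (mul_le_of_le_one_left (norm_nonneg e) (abs_sin_le_one t))

lemma continuous_omul : Continuous fun p : Octonion × Octonion => omul p.1 p.2 := by
  unfold omul; fun_prop

lemma continuous_ocis (e : Octonion) : Continuous (ocis e) := by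
  unfold ocis; fun_prop

section Integration

variable {α : Type*} [MeasurableSpace α] {μ : Measure α}

lemma MeasureTheory.Integrable.omul_bdd {u g : α → Octonion} (hu : Integrable u μ)
    (hg : AEStronglyMeasurable g μ) {C : ℝ} (hC : ∀ x, ‖g x‖ ≤ C) :
    Integrable (fun x => omul (u x) (g x)) μ := by
  refine Integrable.mono' (hu.norm.const_mul (2 * C))
    (continuous_omul.comp_aestronglyMeasurable₂ hu.aestronglyMeasurable hg)
    (ae_of_all _ fun x => ?_)
  calc ‖omul (u x) (g x)‖ ≤ 2 * ‖u x‖ * ‖g x‖ := norm_omul_le _ _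
    _ ≤ 2 * C * ‖u x‖ := by nlinarith [norm_nonneg (u x), hC x]

lemma integral_omul_const {φ : α → Octonion} (hφ : Integrable φ μ) (y : Octonion) :
    ∫ x, omul (φ x) y ∂μ = omul (∫ x, φ x ∂μ) y :=
  let R : Octonion →ₗ[ℝ] Octonion :=
    { toFun := (omul · y)
      map_add' := (omul_add_left · · y)
      map_smul' := (omul_smul_left · · y) }
  R.toContinuousLinearMap.integral_comp_comm hφ

lemma MeasureTheory.Integrable.omul_ocis {u : α → Octonion} (hu : Integrable u μ)
    (e : Octonion) {g : α → ℝ} (hg : Measurable g) :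
    Integrable (fun x => omul (u x) (ocis e (g x))) μ :=
  hu.omul_bdd ((continuous_ocis e).comp_aestronglyMeasurable hg.aestronglyMeasurable)
    fun _ => norm_ocis_le e _

end Integration

def oftIntegrand (u : ℝ × ℝ × ℝ → Octonion) (f x : ℝ × ℝ × ℝ) : Octonion :=
  omul (omul (omul (u x) (ocis e1 (-(2 * π * f.1 * x.1)))) (ocis e2 (-(2 * π * f.2.1 * x.2.1))))
    (ocis e4 (-(2 * π * f.2.2 * x.2.2)))

lemma OFT_eq_integral_oftIntegrand (u : ℝ × ℝ × ℝ → Octonion) (f : ℝ × ℝ × ℝ) :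
    OFT u f = ∫ x, oftIntegrand u f x := by
  simp only [OFT, oftIntegrand, octExp_smul e1_omul_e1, octExp_smul e2_omul_e2,
    octExp_smul e4_omul_e4]

lemma MeasureTheory.Integrable.oftIntegrand {u : ℝ × ℝ × ℝ → Octonion} (hu : Integrable u)
    (f : ℝ × ℝ × ℝ) : Integrable (oftIntegrand u f) :=
  ((hu.omul_ocis e1 (by fun_prop)).omul_ocis e2 (by fun_prop)).omul_ocis e4 (by fun_prop)

lemma oftIntegrand_sin_smul (u : ℝ × ℝ × ℝ → Octonion) (f₀ f₁ f₂ f₃ : ℝ) (x : ℝ × ℝ × ℝ) :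
    oftIntegrand (fun x => Real.sin (2 * π * f₀ * x.1) • u x) (f₁, f₂, f₃) x =
      (2 : ℝ)⁻¹ • omul (oftIntegrand u (f₁ + f₀, -f₂, -f₃) x -
        oftIntegrand u (f₁ - f₀, -f₂, -f₃) x) e1 := by
  rw [oftIntegrand, sin_smul_omul_ocis, oftIntegrand, oftIntegrand]
  ring_nf

theorem OFT_sine_modulation (u : ℝ × ℝ × ℝ → Octonion) (hu : Integrable u)
    (f₀ f₁ f₂ f₃ : ℝ) :
    OFT (fun x => Real.sin (2 * π * f₀ * x.1) • u x) (f₁, f₂, f₃) =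
      (2 : ℝ)⁻¹ •
        omul (OFT u (f₁ + f₀, -f₂, -f₃) - OFT u (f₁ - f₀, -f₂, -f₃)) e1 := by
  have hplus := hu.oftIntegrand (f₁ + f₀, -f₂, -f₃)
  have hminus := hu.oftIntegrand (f₁ - f₀, -f₂, -f₃)
  simp only [OFT_eq_integral_oftIntegrand, oftIntegrand_sin_smul]
  rw [integral_smul, ← integral_sub hplus hminus]
  exact congrArg _ (integral_omul_const (hplus.sub hminus) e1)
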